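/- arXiv:1712.08077 — 4 statements merged into one kernel-verified Lean document; each statement's English description precedes it below -/
import Mathlib

section
/- For every 1 ≤ p, q ≤ ∞ and every m, n ∈ ℕ, the m-homogeneous mixed Bohr radius equals the reciprocal of the m-th root of the mixed unconditional constant: K_m(B_{ℓ_p^n}, B_{ℓ_q^n}) = 1 / χ_M(𝒫(^m ℓ_p^n), 𝒫(^m ℓ_q^n))^{1/m}. -/
open scoped ENNReal NNReal BigOperators

/-- The `ℓ_p` norm on `ℂ^n`, for `p ∈ [1,∞]` (an extended real). -/
noncomputable def lpNorm (p : ℝ≥0∞) {n : ℕ} (z : Fin n → ℂ) : ℝ :=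
  if p = ∞ then ⨆ i, ‖z i‖ else (∑ i, ‖z i‖ ^ p.toReal) ^ (1 / p.toReal)

/-- The closed ball of radius `r` of `ℓ_p^n`. -/
def lpBall (p : ℝ≥0∞) (n : ℕ) (r : ℝ) : Set (Fin n → ℂ) :=
  {z | lpNorm p z ≤ r}

/-- The mixed `(p,q)`-Bohr radius `K(B_{ℓ_p^n}, B_{ℓ_q^n})`: the supremum of all `r ≥ 0`
such that for every entire function `f` on `ℂ^n` with monomial expansion coefficients `a`,
`sup_{z ∈ r·B_{ℓ_q^n}} Σ_α |a_α z^α| ≤ sup_{z ∈ B_{ℓ_p^n}} |f(z)|`. -/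
noncomputable def mixedBohrRadius (p q : ℝ≥0∞) (n : ℕ) : ℝ :=
  sSup {r : ℝ | 0 ≤ r ∧ ∀ (f : (Fin n → ℂ) → ℂ) (a : (Fin n → ℕ) → ℂ),
    (∀ z : Fin n → ℂ, HasSum (fun α : Fin n → ℕ => a α * ∏ i, z i ^ α i) (f z)) →
    ∀ z ∈ lpBall q n r,
      (∑' α : Fin n → ℕ, ((‖a α‖₊ : ℝ≥0∞) * ∏ i, (‖z i‖₊ : ℝ≥0∞) ^ α i))
        ≤ ⨆ w ∈ lpBall p n 1, (‖f w‖₊ : ℝ≥0∞)}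

/-- `Λ(m,n)`, the finite set of multi-indices `α ∈ ℕ_0^n` with `|α| = m`. -/
def Lam (m n : ℕ) : Finset (Fin n → ℕ) := Finset.Nat.antidiagonalTuple n m

/-- The mixed `(p,q)`-unconditional constant `χ_M(𝒫(^m ℓ_p^n), 𝒫(^m ℓ_q^n))`: the least
`λ > 0` such that for all coefficients `a` and unimodular `θ`,
`sup_{z ∈ B_{ℓ_q^n}} |Σ θ_α a_α z^α| ≤ λ · sup_{z ∈ B_{ℓ_p^n}} |Σ a_α z^α|`. -/
noncomputable def unconditionalConst (m : ℕ) (p q : ℝ≥0∞) (n : ℕ) : ℝ :=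
  sInf {l : ℝ | 0 < l ∧ ∀ (a θ : (Fin n → ℕ) → ℂ), (∀ α ∈ Lam m n, ‖θ α‖ = 1) →
    ∀ z ∈ lpBall q n 1,
      ‖∑ α ∈ Lam m n, θ α * a α * ∏ i, z i ^ α i‖ ≤
        l * ⨆ w ∈ lpBall p n 1, ‖∑ α ∈ Lam m n, a α * ∏ i, w i ^ α i‖}

/-- The `m`-homogeneous mixed Bohr radius `K_m(B_{ℓ_p^n}, B_{ℓ_q^n})`: the greatest `r > 0`
such that for every `m`-homogeneous polynomial `P = Σ_{|α|=m} a_α z^α`,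
`sup_{z ∈ r·B_{ℓ_q^n}} Σ |a_α z^α| ≤ sup_{z ∈ B_{ℓ_p^n}} |P(z)|`. -/
noncomputable def homBohrRadius (m : ℕ) (p q : ℝ≥0∞) (n : ℕ) : ℝ :=
  sSup {r : ℝ | 0 < r ∧ ∀ a : (Fin n → ℕ) → ℂ, ∀ z ∈ lpBall q n r,
      ∑ α ∈ Lam m n, ‖a α‖ * ∏ i, ‖z i‖ ^ α i ≤
        ⨆ w ∈ lpBall p n 1, ‖∑ α ∈ Lam m n, a α * ∏ i, w i ^ α i‖}

/-!
Write `C(a)` for the supremum of `|∑ a_α z^α|` over `B_{ℓ_p^n}` and `M(a, z) = ∑ |a_α| |z^α|` for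
Bohr's majorant. Choosing each `θ_α` to cancel the phase of `a_α z^α` shows that `χ_M` is the
least `l` with `M(a, z) ≤ l · C(a)` on `B_{ℓ_q^n}`. Such an `l` exists because `C` is a norm on
the finite-dimensional space of coefficients (a homogeneous polynomial vanishing on a ball
vanishes everywhere), the least one is attained, and testing `z_1^m` at a unit vector gives
`χ_M ≥ 1`. Since `M(a, r z) = r^m M(a, z)`, a radius `r` is admissible for `K_m` exactly when
`r^{-m} ≥ χ_M`, so the admissible radii form the interval `(0, χ_M^{-1/m}]`.
-/

section LpNorm

variable {n : ℕ} {p : ℝ≥0∞}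

lemma lpNorm_nonneg (p : ℝ≥0∞) (z : Fin n → ℂ) : 0 ≤ lpNorm p z := by
  unfold lpNorm
  split_ifs
  · exact Real.iSup_nonneg fun i => norm_nonneg _
  · positivity

lemma lpNorm_smul (hp : p ≠ 0) (c : ℝ) (z : Fin n → ℂ) :
    lpNorm p (c • z) = |c| * lpNorm p z := by
  unfold lpNorm
  split_ifs with h
  · simp only [Pi.smul_apply, norm_smul, Real.norm_eq_abs]
    exact (Real.mul_iSup_of_nonneg (abs_nonneg c) _).symm
  · have ht : 0 < p.toReal := ENNReal.toReal_pos hp h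
    simp_rw [Pi.smul_apply, norm_smul, Real.norm_eq_abs,
      Real.mul_rpow (abs_nonneg c) (norm_nonneg _), ← Finset.mul_sum]
    rw [Real.mul_rpow (by positivity) (by positivity), ← Real.rpow_mul (abs_nonneg c),
      mul_one_div_cancel ht.ne', Real.rpow_one]

lemma norm_le_lpNorm (hp : p ≠ 0) (z : Fin n → ℂ) (i : Fin n) : ‖z i‖ ≤ lpNorm p z := by
  unfold lpNorm
  split_ifs with h
  · exact le_ciSup (f := fun j => ‖z j‖) (Set.finite_range _).bddAbove i
  · have ht : 0 < p.toReal := ENNReal.toReal_pos hp h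
    calc ‖z i‖ = (‖z i‖ ^ p.toReal) ^ (1 / p.toReal) := by
          rw [← Real.rpow_mul (norm_nonneg _), mul_one_div_cancel ht.ne', Real.rpow_one]
      _ ≤ (∑ j, ‖z j‖ ^ p.toReal) ^ (1 / p.toReal) := by
          gcongr
          exact Finset.single_le_sum (f := fun j => ‖z j‖ ^ p.toReal) (fun j _ => by positivity)
            (Finset.mem_univ i)

lemma lpNorm_single (hp : p ≠ 0) (i : Fin n) : lpNorm p (Pi.single i 1) = 1 := by
  refine le_antisymm ?_ (by simpa using norm_le_lpNorm hp (Pi.single i (1 : ℂ)) i)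
  unfold lpNorm
  split_ifs with h
  · refine Real.iSup_le (fun j => ?_) zero_le_one
    by_cases hj : j = i <;> simp [hj]
  · have ht : 0 < p.toReal := ENNReal.toReal_pos hp h
    simp [Pi.single_apply, apply_ite, Real.zero_rpow ht.ne']

end LpNorm

lemma mem_Lam {m n : ℕ} {α : Fin n → ℕ} : α ∈ Lam m n ↔ ∑ i, α i = m :=
  Finset.Nat.mem_antidiagonalTuple

lemma prod_mul_pow {ι M : Type*} [Fintype ι] [CommMonoid M] (c : M) (x : ι → M) (α : ι → ℕ) :
    ∏ i, (c * x i) ^ α i = c ^ (∑ i, α i) * ∏ i, x i ^ α i := by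
  simp only [mul_pow, Finset.prod_mul_distrib, Finset.prod_pow_eq_pow_sum]

lemma norm_sum_mul_prod_pow_le {ι : Type*} {n : ℕ} (s : Finset ι) (b : ι → ℂ)
    (e : ι → Fin n → ℕ) {w : Fin n → ℂ} (hw : ∀ j, ‖w j‖ ≤ 1) :
    ‖∑ i ∈ s, b i * ∏ j, w j ^ e i j‖ ≤ ∑ i ∈ s, ‖b i‖ := by
  refine (norm_sum_le _ _).trans (Finset.sum_le_sum fun i _ => ?_)
  rw [norm_mul, norm_prod]
  refine mul_le_of_le_one_right (norm_nonneg _) (Finset.prod_le_one (fun _ _ => norm_nonneg _)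
    fun j _ => ?_)
  rw [norm_pow]
  exact pow_le_one₀ (norm_nonneg _) (hw j)

lemma eq_zero_of_forall_sum_mul_prod_pow_eq_zero {R σ ι : Type*} [CommRing R] [IsDomain R]
    [Infinite R] [Fintype σ] [Fintype ι] {e : ι → σ → ℕ} (he : e.Injective) {b : ι → R}
    (h : ∀ x : σ → R, ∑ i, b i * ∏ j, x j ^ e i j = 0) : b = 0 := by
  classical
  set Q : MvPolynomial σ R :=
    ∑ i, MvPolynomial.monomial (Finsupp.equivFunOnFinite.symm (e i)) (b i)
  have hQ : Q = 0 := MvPolynomial.funext fun x => by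
    simpa [Q, MvPolynomial.eval_monomial, Finsupp.prod_fintype] using h x
  funext i
  have hcoeff := congrArg (MvPolynomial.coeff (Finsupp.equivFunOnFinite.symm (e i))) hQ
  rwa [MvPolynomial.coeff_sum, Finset.sum_eq_single i, MvPolynomial.coeff_monomial,
    if_pos rfl] at hcoeff
  · intro k _ hki
    rw [MvPolynomial.coeff_monomial, if_neg]
    exact fun h => hki (he (Finsupp.equivFunOnFinite.symm.injective h))
  · simp

lemma sum_mul_prod_pow_eq_zero_of_forall_mem_lpBall {ι : Type*} [Fintype ι] {m n : ℕ}
    {p : ℝ≥0∞} (hp : p ≠ 0) {e : ι → Fin n → ℕ} (he : ∀ i, ∑ j, e i j = m) {b : ι → ℂ}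
    (h : ∀ w ∈ lpBall p n 1, ∑ i, b i * ∏ j, w j ^ e i j = 0) (w : Fin n → ℂ) :
    ∑ i, b i * ∏ j, w j ^ e i j = 0 := by
  set t : ℝ := (1 + lpNorm p w)⁻¹
  have ht : 0 < t := inv_pos.2 (by linarith [lpNorm_nonneg p w])
  have htw : t • w ∈ lpBall p n 1 := by
    change lpNorm p (t • w) ≤ 1
    rw [lpNorm_smul hp, abs_of_pos ht, inv_mul_le_iff₀ (by linarith [lpNorm_nonneg p w])]
    linarith
  have hscale :
      ∑ i, b i * ∏ j, (t • w) j ^ e i j = (t : ℂ) ^ m * ∑ i, b i * ∏ j, w j ^ e i j := by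
    simp only [Pi.smul_apply, Complex.real_smul, prod_mul_pow, he, Finset.mul_sum]
    exact Finset.sum_congr rfl fun i _ => by ring
  have h0 := h _ htw
  rw [hscale] at h0
  exact (mul_eq_zero.1 h0).resolve_left (pow_ne_zero _ (by exact_mod_cast ht.ne'))

noncomputable def polySup (p : ℝ≥0∞) (m n : ℕ) (a : (Fin n → ℕ) → ℂ) : ℝ :=
  ⨆ w ∈ lpBall p n 1, ‖∑ α ∈ Lam m n, a α * ∏ i, w i ^ α i‖

noncomputable def majorant {n : ℕ} (m : ℕ) (a : (Fin n → ℕ) → ℂ) (z : Fin n → ℂ) : ℝ :=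
  ∑ α ∈ Lam m n, ‖a α‖ * ∏ i, ‖z i‖ ^ α i

section HomogeneousPolynomial

open scoped BoundedContinuousFunction

variable {m n : ℕ} {p : ℝ≥0∞}

lemma polySup_nonneg (p : ℝ≥0∞) (m : ℕ) (a : (Fin n → ℕ) → ℂ) : 0 ≤ polySup p m n a :=
  Real.iSup_nonneg fun _ => Real.iSup_nonneg fun _ => norm_nonneg _

lemma norm_sum_mul_prod_pow_le_of_mem_lpBall (hp : p ≠ 0) (a : (Fin n → ℕ) → ℂ)
    {w : Fin n → ℂ} (hw : w ∈ lpBall p n 1) :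
    ‖∑ α ∈ Lam m n, a α * ∏ i, w i ^ α i‖ ≤ ∑ α ∈ Lam m n, ‖a α‖ :=
  norm_sum_mul_prod_pow_le _ _ _ fun j => (norm_le_lpNorm hp w j).trans hw

lemma polySup_le_sum_norm (hp : p ≠ 0) (a : (Fin n → ℕ) → ℂ) :
    polySup p m n a ≤ ∑ α ∈ Lam m n, ‖a α‖ :=
  have hsum := Finset.sum_nonneg fun α (_ : α ∈ Lam m n) => norm_nonneg (a α)
  Real.iSup_le (fun _ => Real.iSup_le (norm_sum_mul_prod_pow_le_of_mem_lpBall hp a) hsum) hsum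

lemma le_polySup (hp : p ≠ 0) (a : (Fin n → ℕ) → ℂ) {w : Fin n → ℂ} (hw : w ∈ lpBall p n 1) :
    ‖∑ α ∈ Lam m n, a α * ∏ i, w i ^ α i‖ ≤ polySup p m n a := by
  set P : (Fin n → ℂ) → ℝ := fun v => ‖∑ α ∈ Lam m n, a α * ∏ i, v i ^ α i‖
  have hbdd : BddAbove (Set.range fun v => ⨆ _ : v ∈ lpBall p n 1, P v) :=
    ⟨_, Set.forall_mem_range.2 fun _ => Real.iSup_le
      (norm_sum_mul_prod_pow_le_of_mem_lpBall hp a) (Finset.sum_nonneg fun _ _ => norm_nonneg _)⟩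
  exact le_ciSup_of_le hbdd w (ciSup_pos (f := fun _ => P w) hw).ge

lemma majorant_nonneg (a : (Fin n → ℕ) → ℂ) (z : Fin n → ℂ) : 0 ≤ majorant m a z :=
  Finset.sum_nonneg fun _ _ => by positivity

lemma majorant_le_sum_norm (a : (Fin n → ℕ) → ℂ) {z : Fin n → ℂ} (hz : ∀ j, ‖z j‖ ≤ 1) :
    majorant m a z ≤ ∑ α ∈ Lam m n, ‖a α‖ :=
  Finset.sum_le_sum fun α _ => mul_le_of_le_one_right (norm_nonneg _)
    (Finset.prod_le_one (fun _ _ => by positivity) fun j _ => pow_le_one₀ (norm_nonneg _) (hz j))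

lemma majorant_smul (a : (Fin n → ℕ) → ℂ) (c : ℝ) (z : Fin n → ℂ) :
    majorant m a (c • z) = |c| ^ m * majorant m a z := by
  rw [majorant, majorant, Finset.mul_sum]
  refine Finset.sum_congr rfl fun α hα => ?_
  simp only [Pi.smul_apply, norm_smul, Real.norm_eq_abs, prod_mul_pow, mem_Lam.1 hα]
  ring

lemma norm_sum_mul_le_majorant {a θ : (Fin n → ℕ) → ℂ} (hθ : ∀ α ∈ Lam m n, ‖θ α‖ = 1)
    (z : Fin n → ℂ) : ‖∑ α ∈ Lam m n, θ α * a α * ∏ i, z i ^ α i‖ ≤ majorant m a z :=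
  (norm_sum_le _ _).trans_eq <| Finset.sum_congr rfl fun α hα => by
    simp only [norm_mul, hθ α hα, one_mul, norm_prod, norm_pow]

noncomputable def homPolyOnBall (hp : p ≠ 0) (m n : ℕ) :
    (Lam m n → ℂ) →ₗ[ℂ] (lpBall p n 1 →ᵇ ℂ) where
  toFun b := .ofNormedAddCommGroup
    (fun w => ∑ α : Lam m n, b α * ∏ j, (w : Fin n → ℂ) j ^ (α : Fin n → ℕ) j)
    (continuous_finsetSum _ fun _ _ => continuous_const.mul <| continuous_finsetProd _ fun j _ =>
      ((continuous_apply j).comp continuous_subtype_val).pow _)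
    (∑ α, ‖b α‖) fun w => norm_sum_mul_prod_pow_le _ _ _ fun j =>
      (norm_le_lpNorm hp _ j).trans w.2
  map_add' b c := by
    ext w
    simp [add_mul, Finset.sum_add_distrib]
  map_smul' c b := by
    ext w
    simp [Finset.mul_sum, mul_assoc]

lemma ker_homPolyOnBall (hp : p ≠ 0) : LinearMap.ker (homPolyOnBall hp m n) = ⊥ := by
  refine LinearMap.ker_eq_bot'.2 fun b hb => ?_
  refine eq_zero_of_forall_sum_mul_prod_pow_eq_zero Subtype.val_injective
    (sum_mul_prod_pow_eq_zero_of_forall_mem_lpBall hp (fun α => mem_Lam.1 α.2) fun w hw => ?_)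
  simpa [homPolyOnBall] using DFunLike.congr_fun hb ⟨w, hw⟩

lemma exists_norm_coeff_le_polySup (hp : p ≠ 0) (m n : ℕ) :
    ∃ K : ℝ≥0, ∀ a : (Fin n → ℕ) → ℂ, ∀ α ∈ Lam m n, ‖a α‖ ≤ K * polySup p m n a := by
  obtain ⟨K, -, hK⟩ := (homPolyOnBall hp m n).exists_antilipschitzWith (ker_homPolyOnBall hp)
  refine ⟨K, fun a α hα => ?_⟩
  let b : Lam m n → ℂ := fun α => a α
  calc ‖a α‖ = ‖b ⟨α, hα⟩‖ := rfl
    _ ≤ ‖b‖ := norm_le_pi_norm b _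
    _ ≤ K * ‖homPolyOnBall hp m n b‖ := hK.le_mul_norm (map_zero _) b
    _ ≤ K * polySup p m n a := by
      gcongr
      refine (BoundedContinuousFunction.norm_le (polySup_nonneg p m a)).2 fun w => ?_
      change ‖∑ α : Lam m n, a α * ∏ j, (w : Fin n → ℂ) j ^ (α : Fin n → ℕ) j‖ ≤ _
      rw [Finset.sum_coe_sort (Lam m n) fun α => a α * ∏ j, (w : Fin n → ℂ) j ^ α j]
      exact le_polySup hp a w.2

end HomogeneousPolynomial

def majorantBounds (m : ℕ) (p q : ℝ≥0∞) (n : ℕ) : Set ℝ :=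
  {l | 0 < l ∧ ∀ a, ∀ z ∈ lpBall q n 1, majorant m a z ≤ l * polySup p m n a}

section MajorantBounds

variable {m n : ℕ} {p q : ℝ≥0∞}

lemma unconditionalConst_eq_sInf_majorantBounds :
    unconditionalConst m p q n = sInf (majorantBounds m p q n) := by
  refine congrArg sInf (Set.ext fun l => and_congr_right fun _ =>
    ⟨fun h a z hz => ?_, fun h a θ hθ z hz => (norm_sum_mul_le_majorant hθ z).trans (h a z hz)⟩)
  choose θ hθ hθa using fun α => Complex.exists_norm_eq_mul_self (a α * ∏ i, z i ^ α i)
  have hsum : ∑ α ∈ Lam m n, θ α * a α * ∏ i, z i ^ α i = (majorant m a z : ℂ) := by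
    simp only [majorant, Complex.ofReal_sum, mul_assoc, ← hθa, norm_mul, norm_prod, norm_pow,
      Complex.ofReal_mul]
  have h' := h a θ (fun α _ => hθ α) z hz
  rwa [hsum, Complex.norm_real, Real.norm_of_nonneg (majorant_nonneg a z)] at h'

lemma majorantBounds_nonempty (hp : p ≠ 0) (hq : q ≠ 0) (m n : ℕ) :
    (majorantBounds m p q n).Nonempty := by
  obtain ⟨K, hK⟩ := exists_norm_coeff_le_polySup hp m n
  refine ⟨(Lam m n).card * K + 1, by positivity, fun a z hz => ?_⟩
  calc majorant m a z ≤ ∑ α ∈ Lam m n, ‖a α‖ :=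
        majorant_le_sum_norm a fun j => (norm_le_lpNorm hq z j).trans hz
    _ ≤ ∑ α ∈ Lam m n, K * polySup p m n a := Finset.sum_le_sum (hK a)
    _ = (Lam m n).card * K * polySup p m n a := by rw [Finset.sum_const, nsmul_eq_mul, mul_assoc]
    _ ≤ ((Lam m n).card * K + 1) * polySup p m n a :=
      mul_le_mul_of_nonneg_right (by linarith) (polySup_nonneg p m a)

lemma majorant_le_sInf_mul (hne : (majorantBounds m p q n).Nonempty)
    (a : (Fin n → ℕ) → ℂ) {z : Fin n → ℂ} (hz : z ∈ lpBall q n 1) :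
    majorant m a z ≤ sInf (majorantBounds m p q n) * polySup p m n a := by
  rcases (polySup_nonneg p m a).eq_or_lt with h | h
  · obtain ⟨l, hl⟩ := hne
    simpa [← h] using hl.2 a z hz
  · rw [← div_le_iff₀ h]
    exact le_csInf hne fun l hl => (div_le_iff₀ h).2 (hl.2 a z hz)

lemma mem_majorantBounds_iff (hne : (majorantBounds m p q n).Nonempty)
    (hpos : 0 < sInf (majorantBounds m p q n)) {l : ℝ} :
    l ∈ majorantBounds m p q n ↔ sInf (majorantBounds m p q n) ≤ l :=
  ⟨fun hl => csInf_le ⟨0, fun _ h => h.1.le⟩ hl, fun hl => ⟨hpos.trans_le hl, fun a _ hz =>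
    (majorant_le_sInf_mul hne a hz).trans (mul_le_mul_of_nonneg_right hl (polySup_nonneg p m a))⟩⟩

lemma one_le_sInf_majorantBounds (hp : p ≠ 0) (hq : q ≠ 0) (hn : 0 < n) :
    1 ≤ sInf (majorantBounds m p q n) := by
  refine le_csInf (majorantBounds_nonempty hp hq m n) fun l hl => ?_
  let i₀ : Fin n := ⟨0, hn⟩
  let a : (Fin n → ℕ) → ℂ := Pi.single (Pi.single i₀ m) 1
  have hmem : Pi.single i₀ m ∈ Lam m n := mem_Lam.2 (by simp)
  have hmajorant : majorant m a (Pi.single i₀ 1) = 1 := by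
    rw [majorant, Finset.sum_eq_single_of_mem _ hmem fun α _ hα => by simp [a, hα]]
    simp only [a, Pi.single_eq_same, norm_one, one_mul]
    exact Finset.prod_eq_one fun i _ => by by_cases hi : i = i₀ <;> simp [hi]
  have hsup : polySup p m n a ≤ 1 :=
    (polySup_le_sum_norm hp a).trans (by simp [a, Pi.single_apply, apply_ite, hmem])
  calc 1 = majorant m a (Pi.single i₀ 1) := hmajorant.symm
    _ ≤ l * polySup p m n a := hl.2 a _ (lpNorm_single hq i₀).le
    _ ≤ l := mul_le_of_le_one_right hl.1.le hsup

end MajorantBounds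

lemma homBohrRadius_eq_sSup {m n : ℕ} {p q : ℝ≥0∞} (hq : q ≠ 0) :
    homBohrRadius m p q n = sSup {r | 0 < r ∧ (r ^ m)⁻¹ ∈ majorantBounds m p q n} := by
  refine congrArg sSup (Set.ext fun r => and_congr_right fun hr => ?_)
  have hball : ∀ z, r • z ∈ lpBall q n r ↔ z ∈ lpBall q n 1 := fun z => by
    change lpNorm q (r • z) ≤ r ↔ lpNorm q z ≤ 1
    rw [lpNorm_smul hq, abs_of_pos hr]
    exact mul_le_iff_le_one_right hr
  change (∀ a, ∀ z ∈ lpBall q n r, majorant m a z ≤ polySup p m n a) ↔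
    0 < (r ^ m)⁻¹ ∧ ∀ a, ∀ z ∈ lpBall q n 1, majorant m a z ≤ (r ^ m)⁻¹ * polySup p m n a
  simp only [inv_pos, pow_pos hr, true_and, le_inv_mul_iff₀ (pow_pos hr m)]
  refine forall_congr' fun a => ⟨fun h z hz => ?_, fun h z hz => ?_⟩
  · simpa [majorant_smul, abs_of_pos hr] using h (r • z) ((hball z).2 hz)
  · have h' := h (r⁻¹ • z) ((hball _).1 (by rwa [smul_inv_smul₀ hr.ne']))
    rwa [majorant_smul, abs_of_pos (inv_pos.2 hr), inv_pow,
      mul_inv_cancel_left₀ (by positivity)] at h'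

lemma le_inv_pow_iff_le_one_div_rpow {χ r : ℝ} {m : ℕ} (hχ : 0 < χ) (hr : 0 < r) (hm : m ≠ 0) :
    χ ≤ (r ^ m)⁻¹ ↔ r ≤ 1 / χ ^ ((1 : ℝ) / m) := by
  rw [one_div (χ ^ ((1 : ℝ) / m)), ← Real.inv_rpow hχ.le, one_div (m : ℝ),
    Real.le_rpow_inv_iff_of_pos hr.le (by positivity) (by positivity), Real.rpow_natCast,
    le_inv_comm₀ hχ (by positivity)]

/-- For all `1 ≤ p, q ≤ ∞` and `m, n ≥ 1`:
`K_m(B_{ℓ_p^n}, B_{ℓ_q^n}) = 1 / χ_M(𝒫(^m ℓ_p^n), 𝒫(^m ℓ_q^n))^(1/m)`. -/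
theorem homBohrRadius_eq_inv_rpow_unconditionalConst (p q : ℝ≥0∞) (hp : 1 ≤ p) (hq : 1 ≤ q)
    (m n : ℕ) (hm : 1 ≤ m) (hn : 1 ≤ n) :
    homBohrRadius m p q n = 1 / unconditionalConst m p q n ^ ((1:ℝ) / m) := by
  have hp0 : p ≠ 0 := (zero_lt_one.trans_le hp).ne'
  have hq0 : q ≠ 0 := (zero_lt_one.trans_le hq).ne'
  have hne := majorantBounds_nonempty hp0 hq0 m n
  have hχ : 1 ≤ sInf (majorantBounds m p q n) := one_le_sInf_majorantBounds hp0 hq0 hn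
  have hradii : {r | 0 < r ∧ (r ^ m)⁻¹ ∈ majorantBounds m p q n} =
      Set.Ioc 0 (1 / sInf (majorantBounds m p q n) ^ ((1 : ℝ) / m)) :=
    Set.ext fun r => and_congr_right fun hr => by
      rw [mem_majorantBounds_iff hne (by linarith),
        le_inv_pow_iff_le_one_div_rpow (by linarith) hr (by omega)]
  rw [homBohrRadius_eq_sSup hq0, unconditionalConst_eq_sInf_majorantBounds, hradii,
    csSup_Ioc (by positivity)]
end

section
/- (Wiener's inequality for the ℓ_p ball.) Let 1 ≤ p ≤ ∞, n ∈ ℕ, and let f be an entire function on ℂ^n with sup_{z ∈ B_{ℓ_p^n}} |f(z)| ≤ 1. Write f = Σ_{m ≥ 0} P_m where each P_m is the m-homogeneous part of the Taylor expansion of f at 0, and let a_0 = f(0). Then for every m ≥ 1, sup_{z ∈ B_{ℓ_p^n}} |P_m(z)| ≤ 1 − |a_0|². -/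
open scoped ENNReal NNReal BigOperators

/-!
Restricting `f` to the complex line through `z` gives the entire function
`g w = f (w • z) = ∑ₖ Pₖ(z) wᵏ`, bounded by `1` on the closed unit disc, so it suffices to show
`‖cₘ‖ ≤ 1 - ‖c₀‖²` for the Taylor coefficients of such a `g`. For `m = 1` this is the
Schwarz–Pick lemma at the origin: compose `g` with the disc automorphism
`u ↦ (u - c₀) / (1 - c̄₀ u)` and apply the Schwarz lemma (if `‖c₀‖ = 1`, `g` is constant by the
maximum modulus principle). For general `m`, averaging `g (ω ζ)` over the `m`-th roots of
unity `ω` produces `∑ⱼ c_{mj} ζ^{mj}`, a function of `w = ζᵐ` that is again bounded by `1` on the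
disc and whose linear coefficient is `cₘ`.
-/

open Metric Set Topology ComplexConjugate

noncomputable def moebius (b u : ℂ) : ℂ := (u - b) / (1 - conj b * u)

lemma norm_one_sub_conj_mul_sq_sub_norm_sub_sq (b u : ℂ) :
    ‖1 - conj b * u‖ ^ 2 - ‖u - b‖ ^ 2 = (1 - ‖u‖ ^ 2) * (1 - ‖b‖ ^ 2) := by
  simp only [Complex.sq_norm, Complex.normSq_apply, Complex.sub_re, Complex.sub_im,
    Complex.mul_re, Complex.mul_im, Complex.one_re, Complex.one_im, Complex.conj_re,
    Complex.conj_im]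
  ring

lemma norm_moebius_le_one {b u : ℂ} (hb : ‖b‖ ≤ 1) (hu : ‖u‖ ≤ 1) : ‖moebius b u‖ ≤ 1 := by
  have hgap := norm_one_sub_conj_mul_sq_sub_norm_sub_sq b u
  have hsq : ‖u - b‖ ^ 2 ≤ ‖1 - conj b * u‖ ^ 2 := by
    nlinarith [mul_nonneg (sub_nonneg.2 (pow_le_one₀ (n := 2) (norm_nonneg u) hu))
      (sub_nonneg.2 (pow_le_one₀ (n := 2) (norm_nonneg b) hb))]
  rw [moebius, norm_div]
  exact div_le_one_of_le₀ ((pow_le_pow_iff_left₀ (norm_nonneg _) (norm_nonneg _)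
    two_ne_zero).1 hsq) (norm_nonneg _)

lemma moebius_self (b : ℂ) : moebius b b = 0 := by simp [moebius]

lemma one_sub_conj_mul_ne_zero {b u : ℂ} (hb : ‖b‖ < 1) (hu : ‖u‖ ≤ 1) :
    1 - conj b * u ≠ 0 := by
  rw [sub_ne_zero, ne_comm]
  refine ne_of_apply_ne norm (ne_of_lt ?_)
  rw [norm_mul, Complex.norm_conj, norm_one]
  exact mul_lt_one_of_nonneg_of_lt_one_left (norm_nonneg b) hb hu

lemma differentiableAt_moebius {b u : ℂ} (hb : ‖b‖ < 1) (hu : ‖u‖ ≤ 1) :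
    DifferentiableAt ℂ (moebius b) u :=
  ((differentiableAt_id.sub_const b).div ((differentiableAt_id.const_mul _).const_sub 1)
    (one_sub_conj_mul_ne_zero hb hu))

lemma hasDerivAt_moebius_self {b : ℂ} (hb : ‖b‖ < 1) :
    HasDerivAt (moebius b) ((1 - ‖b‖ ^ 2 : ℝ) : ℂ)⁻¹ b := by
  have hden : 1 - conj b * b = ((1 - ‖b‖ ^ 2 : ℝ) : ℂ) := by
    rw [mul_comm, Complex.mul_conj, Complex.normSq_eq_norm_sq]; push_cast; ring
  have hne := one_sub_conj_mul_ne_zero hb hb.le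
  refine (((hasDerivAt_id b).sub_const b).div
    (((hasDerivAt_id b).const_mul (conj b)).const_sub 1) hne).congr_deriv ?_
  rw [← hden]
  simp only [id, sub_self, zero_mul, sub_zero, mul_one]
  field_simp

section SchwarzPick

variable {g : ℂ → ℂ} (hd : DifferentiableOn ℂ g (ball 0 1))
  (hg : MapsTo g (ball 0 1) (closedBall 0 1))
include hd hg

lemma norm_deriv_zero_le_one_sub_norm_sq_of_norm_lt_one (hg0 : ‖g 0‖ < 1) :
    ‖deriv g 0‖ ≤ 1 - ‖g 0‖ ^ 2 := by
  have hmaps : MapsTo (moebius (g 0) ∘ g) (ball 0 1) (closedBall ((moebius (g 0) ∘ g) 0) 1) :=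
    fun w hw => by
      simpa only [Function.comp_apply, moebius_self, mem_closedBall_zero_iff] using
        norm_moebius_le_one hg0.le (mem_closedBall_zero_iff.1 (hg hw))
  have hdiff : DifferentiableOn ℂ (moebius (g 0) ∘ g) (ball 0 1) := fun w hw =>
    (differentiableAt_moebius hg0 (mem_closedBall_zero_iff.1 (hg hw))).comp_differentiableWithinAt
      w (hd w hw)
  have hschwarz := Complex.norm_deriv_le_div_of_mapsTo_ball hdiff hmaps one_pos
  have hderiv : deriv (moebius (g 0) ∘ g) 0 = ((1 - ‖g 0‖ ^ 2 : ℝ) : ℂ)⁻¹ * deriv g 0 :=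
    ((hasDerivAt_moebius_self hg0).comp 0
      (hd.differentiableAt (ball_mem_nhds 0 one_pos)).hasDerivAt).deriv
  have hpos : 0 < 1 - ‖g 0‖ ^ 2 := by nlinarith [norm_nonneg (g 0)]
  rwa [hderiv, norm_mul, norm_inv, Complex.norm_real, Real.norm_of_nonneg hpos.le, div_one,
    inv_mul_le_iff₀ hpos, mul_one] at hschwarz

lemma deriv_zero_eq_zero_of_norm_eq_one (hg0 : ‖g 0‖ = 1) : deriv g 0 = 0 := by
  have hmax : IsLocalMax (norm ∘ g) 0 :=
    Filter.mem_of_superset (ball_mem_nhds 0 one_pos) fun w hw => by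
      simpa [hg0] using hg hw
  have hdiff : ∀ᶠ w in 𝓝 0, DifferentiableAt ℂ g w :=
    Filter.mem_of_superset (ball_mem_nhds 0 one_pos) fun w hw =>
      hd.differentiableAt (isOpen_ball.mem_nhds hw)
  have hconst : g =ᶠ[𝓝 0] fun _ => g 0 := Complex.eventually_eq_of_isLocalMax_norm hdiff hmax
  rw [hconst.deriv_eq, deriv_const]

theorem norm_deriv_zero_le_one_sub_norm_sq : ‖deriv g 0‖ ≤ 1 - ‖g 0‖ ^ 2 := by
  rcases (mem_closedBall_zero_iff.1 (hg (mem_ball_self one_pos))).lt_or_eq with hlt | heq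
  · exact norm_deriv_zero_le_one_sub_norm_sq_of_norm_lt_one hd hg hlt
  · rw [deriv_zero_eq_zero_of_norm_eq_one hd hg heq, heq]
    norm_num

end SchwarzPick

lemma IsPrimitiveRoot.geom_sum_pow_eq_ite {R : Type*} [CommRing R] [IsDomain R] {ω : R} {m : ℕ}
    (hω : IsPrimitiveRoot ω m) (j : ℕ) :
    ∑ k ∈ Finset.range m, (ω ^ j) ^ k = if m ∣ j then (m : R) else 0 := by
  split_ifs with hdvd
  · simp [(hω.pow_eq_one_iff_dvd j).2 hdvd]
  · have hne : ω ^ j - 1 ≠ 0 := sub_ne_zero.2 fun h => hdvd ((hω.pow_eq_one_iff_dvd j).1 h)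
    apply mul_right_cancel₀ hne
    rw [geom_sum_mul, ← pow_mul, mul_comm, pow_mul, hω.pow_eq_one, one_pow, sub_self, zero_mul]

lemma hasSum_coeff_mul_pow_mul_of_isPrimitiveRoot {K : Type*} [Field K] [CharZero K]
    [TopologicalSpace K] [IsTopologicalRing K] {c : ℕ → K} {g : K → K}
    (hg : ∀ w, HasSum (fun k => c k * w ^ k) (g w)) {m : ℕ} (hm : 0 < m) {ω : K}
    (hω : IsPrimitiveRoot ω m) (ζ : K) :
    HasSum (fun j => c (m * j) * (ζ ^ m) ^ j)
      ((m : K)⁻¹ * ∑ k ∈ Finset.range m, g (ω ^ k * ζ)) := by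
  have hsum : HasSum (fun j => (if m ∣ j then (m : K) else 0) * (c j * ζ ^ j))
      (∑ k ∈ Finset.range m, g (ω ^ k * ζ)) := by
    refine (hasSum_sum fun k _ => hg (ω ^ k * ζ)).congr_fun fun j => ?_
    rw [← hω.geom_sum_pow_eq_ite j, Finset.sum_mul]
    exact Finset.sum_congr rfl fun k _ => by ring
  have hmultiples := ((mul_right_injective₀ hm.ne').hasSum_iff fun j hj => by
    rw [if_neg fun ⟨i, hi⟩ => hj ⟨i, hi.symm⟩, zero_mul]).2 hsum
  refine (hmultiples.mul_left (m : K)⁻¹).congr_fun fun j => ?_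
  simp [hm.ne', pow_mul]

section EntireSeries

variable {c : ℕ → ℂ} {g : ℂ → ℂ} (hg : ∀ w, HasSum (fun k => c k * w ^ k) (g w))
include hg

lemma hasFPowerSeriesOnBall_ofScalars_of_hasSum :
    HasFPowerSeriesOnBall g (FormalMultilinearSeries.ofScalars ℂ c) 0 ∞ := by
  have hrad : (FormalMultilinearSeries.ofScalars ℂ c).radius = ∞ := by
    refine FormalMultilinearSeries.radius_eq_top_of_summable_norm _ fun r => ?_
    simpa [FormalMultilinearSeries.ofScalars_norm] using summable_norm_iff.2 (hg r).summable
  refine ⟨hrad.ge, ENNReal.zero_lt_top, fun {y} _ => ?_⟩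
  simpa [FormalMultilinearSeries.ofScalars_apply_eq, mul_comm] using hg y

lemma norm_coeff_one_le_one_sub_norm_sq (hb : ∀ w, ‖w‖ ≤ 1 → ‖g w‖ ≤ 1) :
    ‖c 1‖ ≤ 1 - ‖c 0‖ ^ 2 := by
  have hps := hasFPowerSeriesOnBall_ofScalars_of_hasSum hg
  have h0 : g 0 = c 0 := by simpa using (hps.coeff_zero fun _ => 0).symm
  have h1 : deriv g 0 = c 1 := by simpa using hps.hasFPowerSeriesAt.deriv
  have hmaps : MapsTo g (ball 0 1) (closedBall 0 1) := fun w hw =>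
    mem_closedBall_zero_iff.2 (hb w (mem_ball_zero_iff.1 hw).le)
  simpa only [h0, h1] using
    norm_deriv_zero_le_one_sub_norm_sq (hps.differentiableOn.mono (by simp)) hmaps

theorem norm_coeff_le_one_sub_norm_sq (hb : ∀ w, ‖w‖ ≤ 1 → ‖g w‖ ≤ 1) {m : ℕ} (hm : 0 < m) :
    ‖c m‖ ≤ 1 - ‖c 0‖ ^ 2 := by
  obtain ⟨ω, hω⟩ : ∃ ω : ℂ, IsPrimitiveRoot ω m := ⟨_, Complex.isPrimitiveRoot_exp m hm.ne'⟩
  choose root hroot using fun w : ℂ => IsAlgClosed.exists_pow_nat_eq w hm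
  have hsection (w : ℂ) : HasSum (fun j => c (m * j) * w ^ j)
      ((m : ℂ)⁻¹ * ∑ k ∈ Finset.range m, g (ω ^ k * root w)) := by
    simpa only [hroot] using hasSum_coeff_mul_pow_mul_of_isPrimitiveRoot hg hm hω (root w)
  have hbound (w : ℂ) (hw : ‖w‖ ≤ 1) :
      ‖(m : ℂ)⁻¹ * ∑ k ∈ Finset.range m, g (ω ^ k * root w)‖ ≤ 1 := by
    have hroot_le : ‖root w‖ ≤ 1 := by
      rwa [← pow_le_one_iff_of_nonneg (norm_nonneg _) hm.ne', ← norm_pow, hroot]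
    calc ‖(m : ℂ)⁻¹ * ∑ k ∈ Finset.range m, g (ω ^ k * root w)‖
        ≤ (m : ℝ)⁻¹ * ∑ _k ∈ Finset.range m, (1 : ℝ) := by
          rw [norm_mul, norm_inv, Complex.norm_natCast]
          gcongr
          refine norm_sum_le_of_le _ fun k _ => hb _ ?_
          rwa [norm_mul, norm_pow, hω.norm'_eq_one hm.ne', one_pow, one_mul]
      _ = 1 := by simp [hm.ne']
  simpa using norm_coeff_one_le_one_sub_norm_sq hsection hbound

end EntireSeries

lemma lpNorm_le_lpNorm (p : ℝ≥0∞) {n : ℕ} {z z' : Fin n → ℂ} (h : ∀ i, ‖z i‖ ≤ ‖z' i‖) :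
    lpNorm p z ≤ lpNorm p z' := by
  unfold lpNorm
  split_ifs
  · exact ciSup_mono (Set.finite_range _).bddAbove h
  · gcongr with i
    exact h i

lemma lpNorm_smul_le (p : ℝ≥0∞) {n : ℕ} {w : ℂ} (hw : ‖w‖ ≤ 1) (z : Fin n → ℂ) :
    lpNorm p (w • z) ≤ lpNorm p z :=
  lpNorm_le_lpNorm p fun i => by
    rw [Pi.smul_apply, smul_eq_mul, norm_mul]
    exact mul_le_of_le_one_left (norm_nonneg _) hw

def homogeneousPart {n : ℕ} (a : (Fin n → ℕ) → ℂ) (m : ℕ) (z : Fin n → ℂ) : ℂ :=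
  ∑ α ∈ Lam m n, a α * ∏ i, z i ^ α i

lemma homogeneousPart_zero {n : ℕ} (a : (Fin n → ℕ) → ℂ) (z : Fin n → ℂ) :
    homogeneousPart a 0 z = a 0 := by
  simp [homogeneousPart, Lam, Finset.Nat.antidiagonalTuple_zero_right]

lemma hasSum_homogeneousPart_mul_pow {n : ℕ} {f : (Fin n → ℂ) → ℂ} {a : (Fin n → ℕ) → ℂ}
    (hexp : ∀ z, HasSum (fun α : Fin n → ℕ => a α * ∏ i, z i ^ α i) (f z))
    (z : Fin n → ℂ) (w : ℂ) :
    HasSum (fun k => homogeneousPart a k z * w ^ k) (f (w • z)) := by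
  have hmonomial (α : Fin n → ℕ) :
      a α * ∏ i, (w • z) i ^ α i = (a α * ∏ i, z i ^ α i) * w ^ ∑ i, α i := by
    simp only [Pi.smul_apply, smul_eq_mul, mul_pow, Finset.prod_mul_distrib,
      Finset.prod_pow_eq_pow_sum]
    ring
  have hfiber (k : ℕ) : (fun α : Fin n → ℕ => ∑ i, α i) ⁻¹' {k} = ↑(Lam k n) := by
    ext α
    simp [Lam, Finset.Nat.mem_antidiagonalTuple]
  have hgrouped := ((hexp (w • z)).congr_fun fun α => (hmonomial α).symm).tsum_fiberwise
    fun α => ∑ i, α i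
  refine hgrouped.congr_fun fun k => ?_
  rw [hfiber, Finset.tsum_subtype' (Lam k n) (fun α => (a α * ∏ i, z i ^ α i) * w ^ ∑ i, α i),
    homogeneousPart, Finset.sum_mul]
  refine Finset.sum_congr rfl fun α hα => ?_
  rw [Finset.Nat.mem_antidiagonalTuple.1 hα]

theorem wiener_inequality_general (p : ℝ≥0∞) (n : ℕ)
    (f : (Fin n → ℂ) → ℂ) (a : (Fin n → ℕ) → ℂ)
    (hexp : ∀ z : Fin n → ℂ, HasSum (fun α : Fin n → ℕ => a α * ∏ i, z i ^ α i) (f z))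
    (hbd : ∀ z ∈ lpBall p n 1, ‖f z‖ ≤ 1)
    (m : ℕ) (hm : 1 ≤ m) :
    ∀ z ∈ lpBall p n 1,
      ‖∑ α ∈ Lam m n, a α * ∏ i, z i ^ α i‖ ≤ 1 - ‖a 0‖ ^ 2 := by
  intro z hz
  have hline : ∀ w : ℂ, ‖w‖ ≤ 1 → ‖f (w • z)‖ ≤ 1 := fun w hw =>
    hbd _ ((lpNorm_smul_le p hw z).trans hz)
  have hwiener := norm_coeff_le_one_sub_norm_sq (hasSum_homogeneousPart_mul_pow hexp z) hline hm
  rwa [homogeneousPart_zero] at hwiener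

/-- Wiener's inequality for the `ℓ_p` ball: if `f` is entire on `ℂ^n` with monomial
coefficients `a`, and `|f| ≤ 1` on `B_{ℓ_p^n}`, then for each `m ≥ 1` the `m`-homogeneous
part `P_m` of `f` satisfies `sup_{B_{ℓ_p^n}} |P_m| ≤ 1 - |f(0)|²`. -/
theorem wiener_inequality (p : ℝ≥0∞) (hp : 1 ≤ p) (n : ℕ)
    (f : (Fin n → ℂ) → ℂ) (a : (Fin n → ℕ) → ℂ)
    (hexp : ∀ z : Fin n → ℂ, HasSum (fun α : Fin n → ℕ => a α * ∏ i, z i ^ α i) (f z))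
    (hbd : ∀ z ∈ lpBall p n 1, ‖f z‖ ≤ 1)
    (m : ℕ) (hm : 1 ≤ m) :
    ∀ z ∈ lpBall p n 1,
      ‖∑ α ∈ Lam m n, a α * ∏ i, z i ^ α i‖ ≤ 1 - ‖a 0‖ ^ 2 :=
  wiener_inequality_general p n f a hexp hbd m hm
end

section
/- Let 1 < q ≤ p ≤ 2, with conjugate exponents p', q'. There exists a constant C > 0 (depending only on p and q) such that for all m, n ∈ ℕ with n ≥ 2 and m ≥ (log n)^{q'/p'}, one has ( Σ_{α ∈ Λ(m−1,n)} ((m−1)!/α!)^{(1/p − 1/q) q'} )^{1/q'} ≤ C^m · n^{m/q'} / (log n)^{m/p'}. -/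
open scoped ENNReal NNReal BigOperators

/-!
Since `q ≤ p`, the exponent `(1/p - 1/q) q'` is nonpositive while every multinomial coefficient
is at least `1`, so the sum is at most `#Λ(m-1,n) = C(n+m-2, m-1)`. With `k = q'/p' ≥ 1` and
`μ = min m n`, stars and bars together with `m^m ≤ e^m m!` give `#Λ(m-1,n) μ^m ≤ (4en)^m`, and
`(log n)^k ≤ k^k μ`: for `μ = m` this is the hypothesis, for `μ = n` it is `log n ≤ k n^(1/k)`.
Multiplying the two and taking `q'`-th roots gives the bound with `C = (4e k^k)^(1/q')`.
-/

open Finset Real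
open scoped Nat

lemma card_Lam (M n : ℕ) : #(Lam M n) = (n + M - 1).choose M := by
  classical
  have h := card_finsuppAntidiag_nat_eq_choose (s := (univ : Finset (Fin n))) M
  rwa [finsuppAntidiag, card_map, card_attach, piAntidiag_univ_fin_eq_antidiagonalTuple,
    Finset.card_fin] at h

lemma card_Lam_le_choose_succ {n : ℕ} (hn : 0 < n) (M : ℕ) :
    #(Lam M n) ≤ (n + M).choose (M + 1) := by
  obtain ⟨n, rfl⟩ := Nat.exists_eq_succ_of_ne_zero hn.ne'
  rw [card_Lam, Nat.succ_add, Nat.choose_succ_succ, Nat.succ_sub_one]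
  exact Nat.le_add_right _ _

lemma one_le_factorial_div_prod_factorial {M n : ℕ} {α : Fin n → ℕ} (hα : α ∈ Lam M n) :
    (1 : ℝ) ≤ (M ! : ℝ) / ∏ i, ((α i)! : ℝ) := by
  have hdvd : ∏ i, (α i)! ∣ M ! := by
    rw [← Finset.Nat.mem_antidiagonalTuple.mp hα]
    exact Nat.prod_factorial_dvd_factorial_sum _ _
  rw [one_le_div (by positivity)]
  exact_mod_cast Nat.le_of_dvd M.factorial_pos hdvd

lemma sum_Lam_rpow_le_card {t : ℝ} (ht : t ≤ 0) (M n : ℕ) :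
    ∑ α ∈ Lam M n, ((M ! : ℝ) / ∏ i, ((α i)! : ℝ)) ^ t ≤ #(Lam M n) := by
  simpa using Finset.sum_le_card_nsmul _ _ 1 fun α hα =>
    rpow_le_one_of_one_le_of_nonpos (one_le_factorial_div_prod_factorial hα) ht

lemma pow_self_le_exp_mul_factorial (m : ℕ) : (m : ℝ) ^ m ≤ exp 1 ^ m * m ! := by
  have h := pow_div_factorial_le_exp _ (Nat.cast_nonneg m) m
  rwa [div_le_iff₀ (by positivity), ← exp_one_pow] at h

lemma choose_mul_pow_self_le (N m : ℕ) : (N.choose m : ℝ) * m ^ m ≤ (exp 1 * N) ^ m := by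
  calc (N.choose m : ℝ) * m ^ m ≤ (N ^ m / m !) * (exp 1 ^ m * m !) := by
        gcongr
        · exact Nat.choose_le_pow_div m N
        · exact pow_self_le_exp_mul_factorial m
    _ = (exp 1 * N) ^ m := by field_simp; ring

lemma card_Lam_mul_min_pow_le {m n : ℕ} (hm : 0 < m) (hn : 0 < n) :
    (#(Lam (m - 1) n) : ℝ) * (min m n : ℕ) ^ m ≤ (4 * exp 1 * n) ^ m := by
  have hcard : (#(Lam (m - 1) n) : ℝ) ≤ (n + m - 1).choose m := by
    have := card_Lam_le_choose_succ hn (m - 1)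
    rw [Nat.sub_add_cancel hm, ← Nat.add_sub_assoc hm] at this
    exact_mod_cast this
  have he : (1 : ℝ) ≤ exp 1 := one_le_exp zero_le_one
  rcases le_total m n with hmn | hnm
  · rw [min_eq_left hmn]
    calc (#(Lam (m - 1) n) : ℝ) * (m : ℕ) ^ m ≤ ((n + m - 1).choose m : ℝ) * m ^ m := by
          gcongr
      _ ≤ (exp 1 * (n + m - 1 : ℕ)) ^ m := choose_mul_pow_self_le _ _
      _ ≤ (4 * exp 1 * n) ^ m := by
        gcongr ?_ ^ m
        have : ((n + m - 1 : ℕ) : ℝ) ≤ 2 * n := by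
          exact_mod_cast (by omega : n + m - 1 ≤ 2 * n)
        nlinarith [exp_pos 1]
  · rw [min_eq_right hnm]
    have h4 : ((n + m - 1).choose m : ℝ) ≤ 4 ^ m := by
      have := (Nat.choose_le_two_pow (n + m - 1) m).trans
        (Nat.pow_le_pow_right two_pos (by omega : n + m - 1 ≤ 2 * m))
      rw [pow_mul] at this
      exact_mod_cast this
    calc (#(Lam (m - 1) n) : ℝ) * (n : ℕ) ^ m ≤ 4 ^ m * n ^ m := by
          gcongr; exact hcard.trans h4
      _ = (4 * n) ^ m := (mul_pow _ _ _).symm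
      _ ≤ (4 * exp 1 * n) ^ m := by gcongr; nlinarith

lemma log_rpow_le_rpow_mul_self {x k : ℝ} (hx : 1 ≤ x) (hk : 0 < k) :
    log x ^ k ≤ k ^ k * x := by
  have hlog : log x ≤ k * x ^ (1 / k) := by
    simpa [div_div_eq_mul_div, mul_comm] using log_le_rpow_div (by linarith) (one_div_pos.2 hk)
  calc log x ^ k ≤ (k * x ^ (1 / k)) ^ k := by gcongr; exact log_nonneg hx
    _ = k ^ k * x := by
      rw [mul_rpow hk.le (by positivity), ← rpow_mul (by linarith), one_div_mul_cancel hk.ne',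
        rpow_one]

lemma log_rpow_le_mul_min {k : ℝ} (hk : 1 ≤ k) {m n : ℕ} (hn : 0 < n)
    (hlog : log n ^ k ≤ m) : log n ^ k ≤ k ^ k * (min m n : ℕ) := by
  rcases le_total m n with hmn | hnm
  · rw [min_eq_left hmn]
    exact hlog.trans (le_mul_of_one_le_left (by positivity) (one_le_rpow hk (by linarith)))
  · rw [min_eq_right hnm]
    exact log_rpow_le_rpow_mul_self (Nat.one_le_cast.2 hn) (by linarith)

lemma sum_Lam_rpow_mul_log_pow_le {t k : ℝ} (ht : t ≤ 0) (hk : 1 ≤ k) {m n : ℕ} (hm : 0 < m)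
    (hn : 0 < n) (hlog : log n ^ k ≤ m) :
    (∑ α ∈ Lam (m - 1) n, (((m - 1)! : ℝ) / ∏ i, ((α i)! : ℝ)) ^ t) * (log n ^ k) ^ m ≤
      (4 * exp 1 * k ^ k * n) ^ m := by
  calc (∑ α ∈ Lam (m - 1) n, (((m - 1)! : ℝ) / ∏ i, ((α i)! : ℝ)) ^ t) * (log n ^ k) ^ m
      ≤ #(Lam (m - 1) n) * (k ^ k * (min m n : ℕ)) ^ m := by
        gcongr
        · exact sum_Lam_rpow_le_card ht _ _
        · exact log_rpow_le_mul_min hk hn hlog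
    _ = (k ^ k) ^ m * (#(Lam (m - 1) n) * (min m n : ℕ) ^ m) := by ring
    _ ≤ (k ^ k) ^ m * (4 * exp 1 * n) ^ m := by gcongr; exact card_Lam_mul_min_pow_le hm hn
    _ = (4 * exp 1 * k ^ k * n) ^ m := by ring

lemma conjExponent_pos {p p' : ℝ} (hp : 1 < p) (hp' : 1 / p + 1 / p' = 1) : 0 < p' := by
  have : 1 / p < 1 := (div_lt_one (by linarith)).2 hp
  exact one_div_pos.1 (by linarith)

lemma conjExponent_le_of_le {p q p' q' : ℝ} (hq : 1 < q) (hqp : q ≤ p)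
    (hp' : 1 / p + 1 / p' = 1) (hq' : 1 / q + 1 / q' = 1) : p' ≤ q' := by
  have : 1 / p ≤ 1 / q := one_div_le_one_div_of_le (by linarith) hqp
  exact le_of_one_div_le_one_div (conjExponent_pos hq hq') (by linarith)

theorem sum_multinomial_bound_large_m_general (p q p' q' : ℝ) (hq : 1 < q) (hqp : q ≤ p)
    (hp' : 1/p + 1/p' = 1) (hq' : 1/q + 1/q' = 1) :
    ∃ C : ℝ, 0 < C ∧ ∀ m n : ℕ, 2 ≤ n → 1 ≤ m →
      Real.log n ^ (q'/p') ≤ (m : ℝ) →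
      (∑ α ∈ Lam (m-1) n,
          (((m-1).factorial : ℝ) / ∏ i, ((α i).factorial : ℝ)) ^ ((1/p - 1/q) * q'))
          ^ ((1:ℝ)/q')
        ≤ C ^ m * (n : ℝ) ^ ((m : ℝ)/q') / Real.log n ^ ((m : ℝ)/p') := by
  have hq'pos : 0 < q' := conjExponent_pos hq hq'
  have hp'pos : 0 < p' := conjExponent_pos (hq.trans_le hqp) hp'
  have ht : (1 / p - 1 / q) * q' ≤ 0 := mul_nonpos_of_nonpos_of_nonneg
    (by linarith [one_div_le_one_div_of_le (by linarith) hqp]) hq'pos.le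
  set k := q' / p'
  have hk : 1 ≤ k := (one_le_div hp'pos).2 (conjExponent_le_of_le hq hqp hp' hq')
  set A := 4 * exp 1 * k ^ k
  have hA : 0 < A := mul_pos (by positivity) (rpow_pos_of_pos (by linarith) _)
  refine ⟨A ^ (1 / q'), rpow_pos_of_pos hA _, fun m n hn hm hlog => ?_⟩
  have hL : 0 < log n := log_pos (by exact_mod_cast hn)
  set S :=
    ∑ α ∈ Lam (m - 1) n, (((m - 1)! : ℝ) / ∏ i, ((α i)! : ℝ)) ^ ((1 / p - 1 / q) * q')
  have hS : 0 ≤ S := sum_nonneg fun α _ => rpow_nonneg (by positivity) _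
  rw [le_div_iff₀ (by positivity)]
  calc _ = (S * (log n ^ k) ^ m) ^ (1 / q') := by
        rw [mul_rpow hS (by positivity), ← rpow_natCast_mul (by positivity), ← rpow_mul hL.le]
        congr 2
        simp only [k]
        field_simp
    _ ≤ ((A * n) ^ m) ^ (1 / q') := by
        gcongr
        exact sum_Lam_rpow_mul_log_pow_le ht hk hm (by omega) hlog
    _ = (A ^ (1 / q')) ^ m * n ^ (m / q') := by
        rw [← rpow_natCast_mul (by positivity), mul_rpow hA.le (by positivity),
          ← rpow_mul_natCast hA.le, mul_comm (1 / q'), mul_one_div]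

/-- For `1 < q ≤ p ≤ 2` with conjugate exponents `p'`, `q'`, there is `C > 0` such that
for `n ≥ 2` and `m ≥ (log n)^(q'/p')`:
`(Σ_{α ∈ Λ(m−1,n)} ((m−1)!/α!)^((1/p − 1/q) q'))^(1/q') ≤ C^m n^(m/q') / (log n)^(m/p')`. -/
theorem sum_multinomial_bound_large_m (p q p' q' : ℝ) (hq : 1 < q) (hqp : q ≤ p) (hp : p ≤ 2)
    (hp' : 1/p + 1/p' = 1) (hq' : 1/q + 1/q' = 1) :
    ∃ C : ℝ, 0 < C ∧ ∀ m n : ℕ, 2 ≤ n → 1 ≤ m →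
      Real.log n ^ (q'/p') ≤ (m : ℝ) →
      (∑ α ∈ Lam (m-1) n,
          (((m-1).factorial : ℝ) / ∏ i, ((α i).factorial : ℝ)) ^ ((1/p - 1/q) * q'))
          ^ ((1:ℝ)/q')
        ≤ C ^ m * (n : ℝ) ^ ((m : ℝ)/q') / Real.log n ^ ((m : ℝ)/p') :=
  sum_multinomial_bound_large_m_general p q p' q' hq hqp hp' hq'
end

section
/- Let 1 < q ≤ p ≤ 2, with conjugate exponents p', q', and set β = q'(1/q − 1/p). There exists a constant C > 0 (depending only on p and q) such that for all m, n ∈ ℕ with n large enough and m ≤ log(n) / (β · log log(n)), one has ( Σ_{α ∈ Λ(m−1,n)} ((m−1)!/α!)^{(1/p − 1/q) q'} )^{1/q'} ≤ C^m · n^{m/q'} / (log n)^{m/p'}. -/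
open scoped ENNReal NNReal BigOperators

/-!
Write `M = m - 1`, `L = log n` and `S = Σ_{α ∈ Λ(M,n)} (α!/M!)^β`. Stirling's bound
`M^M ≤ M! e^M` reduces `S` to `Σ_α (α!)^β`. Weighting each `α` by `t^{|α|} = t^M` with `t = M/n`
gives `(M/n)^M Σ_α (α!)^β ≤ (Σ_{j ≤ M} (j!)^β t^j)^n`, and since `j! ≤ M^{j-1}` the inner sum is
dominated by a geometric series, at most `1 + 2M/n` once `2 M^{1+β} ≤ n`. Hence
`M^{(1+β)M} S ≤ e^{(2+β)M} n^M`. The hypothesis `m ≤ L / (β log L)` is what makes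
`(L/M)^{(1+β)M} ≤ √n`, so that `M^{(1+β)M}` may be replaced by `L^{(1+β)M}` at the cost of a
factor `√n`; the remaining factors `L^{1+β} ≤ √n` and `e^{2+β}` are absorbed by one more power
of `n` and of the constant.
-/

open Real Filter Finset
open scoped Nat

theorem Nat.factorial_succ_le_pow (i : ℕ) : (i + 1)! ≤ (i + 1) ^ i := by
  have h : (i + 1)! = (i + 1).descFactorial i := by
    simpa using (Nat.factorial_mul_descFactorial (Nat.le_succ i)).symm
  exact h ▸ Nat.descFactorial_le_pow _ _

theorem pow_mul_sum_Lam_prod_le (n M : ℕ) {g : ℕ → ℝ} (hg : ∀ j, 0 ≤ g j) {t : ℝ}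
    (ht : 0 ≤ t) :
    t ^ M * ∑ α ∈ Lam M n, ∏ i, g (α i) ≤ (∑ j ∈ range (M + 1), g j * t ^ j) ^ n := by
  have hsub : Lam M n ⊆ Fintype.piFinset fun _ => range (M + 1) := by
    intro α hα
    rw [Lam, Finset.Nat.mem_antidiagonalTuple] at hα
    simpa only [Fintype.mem_piFinset, mem_range, Nat.lt_succ_iff, ← hα] using
      fun i => single_le_sum (fun _ _ => Nat.zero_le _) (mem_univ i)
  calc t ^ M * ∑ α ∈ Lam M n, ∏ i, g (α i) = ∑ α ∈ Lam M n, ∏ i, g (α i) * t ^ α i := by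
        rw [mul_sum]
        refine sum_congr rfl fun α hα => ?_
        rw [prod_mul_distrib, prod_pow_eq_pow_sum,
          (Finset.Nat.mem_antidiagonalTuple.mp hα), mul_comm]
    _ ≤ ∑ α ∈ Fintype.piFinset fun _ => range (M + 1), ∏ i, g (α i) * t ^ α i :=
        sum_le_sum_of_subset_of_nonneg hsub fun α _ _ =>
          prod_nonneg fun i _ => mul_nonneg (hg _) (pow_nonneg ht _)
    _ = (∑ j ∈ range (M + 1), g j * t ^ j) ^ n := by
        rw [← prod_univ_sum (fun _ => range (M + 1)) fun _ j => g j * t ^ j, prod_const,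
          card_univ, Fintype.card_fin]

theorem sum_range_factorial_rpow_mul_pow_le {β t : ℝ} (hβ : 0 ≤ β) (ht : 0 ≤ t) {M : ℕ}
    (hMt : 2 * ((M : ℝ) ^ β * t) ≤ 1) :
    ∑ j ∈ range (M + 1), (j ! : ℝ) ^ β * t ^ j ≤ 1 + 2 * t := by
  have hterm : ∀ i ∈ range M, ((i + 1)! : ℝ) ^ β * t ^ (i + 1) ≤ t * (1 / 2) ^ i := by
    intro i hi
    have hfac : ((i + 1)! : ℝ) ≤ (M : ℝ) ^ i := by
      exact_mod_cast (Nat.factorial_succ_le_pow i).trans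
        (Nat.pow_le_pow_left (mem_range.mp hi) i)
    calc ((i + 1)! : ℝ) ^ β * t ^ (i + 1) ≤ ((M : ℝ) ^ i) ^ β * t ^ (i + 1) := by gcongr
      _ = t * ((M : ℝ) ^ β * t) ^ i := by
        rw [← rpow_pow_comm (Nat.cast_nonneg M), mul_pow, pow_succ]; ring
      _ ≤ t * (1 / 2) ^ i := by gcongr; linarith
  rw [sum_range_succ']
  calc ∑ i ∈ range M, ((i + 1)! : ℝ) ^ β * t ^ (i + 1) + ((0 ! : ℕ) : ℝ) ^ β * t ^ 0
      ≤ ∑ i ∈ range M, t * (1 / 2) ^ i + 1 := add_le_add (sum_le_sum hterm) (by simp)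
    _ ≤ t * 2 + 1 := by rw [← mul_sum]; gcongr; exact sum_geometric_two_le M
    _ = 1 + 2 * t := by ring

theorem pow_mul_sum_Lam_factorial_rpow_le {β : ℝ} (hβ : 0 ≤ β) {M n : ℕ} (hn : 0 < n)
    (hMn : 2 * ((M : ℝ) ^ β * M) ≤ n) :
    (M : ℝ) ^ M * ∑ α ∈ Lam M n, (∏ i, ((α i)! : ℝ)) ^ β ≤ exp (2 * M) * n ^ M := by
  have hn' : (0 : ℝ) < n := by exact_mod_cast hn
  set t : ℝ := M / n with ht_def
  have ht : 0 ≤ t := by positivity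
  have hnt : (n : ℝ) * t = M := mul_div_cancel₀ _ hn'.ne'
  have hgeom : ∑ j ∈ range (M + 1), (j ! : ℝ) ^ β * t ^ j ≤ 1 + 2 * t := by
    refine sum_range_factorial_rpow_mul_pow_le hβ ht ?_
    rwa [ht_def, ← mul_div_assoc, ← mul_div_assoc, div_le_one hn']
  have hprod := pow_mul_sum_Lam_prod_le n M (g := fun j => (j ! : ℝ) ^ β)
    (fun j => by positivity) ht
  calc (M : ℝ) ^ M * ∑ α ∈ Lam M n, (∏ i, ((α i)! : ℝ)) ^ β
      = n ^ M * (t ^ M * ∑ α ∈ Lam M n, ∏ i, ((α i)! : ℝ) ^ β) := by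
        simp_rw [finsetProd_rpow _ _ fun i _ => Nat.cast_nonneg _, ← mul_assoc, ← mul_pow, hnt]
    _ ≤ n ^ M * (1 + 2 * t) ^ n := by
        gcongr
        exact hprod.trans (pow_le_pow_left₀ (sum_nonneg fun j _ => by positivity) hgeom n)
    _ ≤ n ^ M * exp (2 * t) ^ n := by
        gcongr
        linarith [add_one_le_exp (2 * t)]
    _ = exp (2 * M) * n ^ M := by
        rw [← exp_nat_mul, ← hnt, mul_comm]; ring_nf

theorem pow_rpow_mul_sum_Lam_multinomial_rpow_neg_le {β : ℝ} (hβ : 0 ≤ β) {M n : ℕ}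
    (hn : 0 < n) (hMn : 2 * ((M : ℝ) ^ β * M) ≤ n) :
    ((M : ℝ) ^ M) ^ (1 + β) * ∑ α ∈ Lam M n, ((M ! : ℝ) / ∏ i, ((α i)! : ℝ)) ^ (-β)
      ≤ exp ((2 + β) * M) * n ^ M := by
  have hstirling : ((M : ℝ) ^ M) ^ β ≤ (M ! : ℝ) ^ β * exp (β * M) := by
    have h := pow_div_factorial_le_exp _ (Nat.cast_nonneg M) M
    rw [div_le_iff₀ (by positivity)] at h
    calc ((M : ℝ) ^ M) ^ β ≤ (exp M * M !) ^ β := rpow_le_rpow (by positivity) h hβ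
      _ = (M ! : ℝ) ^ β * exp (β * M) := by
        rw [mul_rpow (exp_pos _).le (Nat.cast_nonneg _), ← exp_mul, mul_comm, mul_comm β]
  have hterm : ∀ α : Fin n → ℕ, ((M ! : ℝ) / ∏ i, ((α i)! : ℝ)) ^ (-β)
      = (∏ i, ((α i)! : ℝ)) ^ β / (M ! : ℝ) ^ β := by
    intro α
    rw [rpow_neg (by positivity), ← inv_rpow (by positivity), inv_div,
      div_rpow (by positivity) (by positivity)]
  have hMfac : (0 : ℝ) < (M ! : ℝ) ^ β := by positivity
  simp_rw [hterm, ← sum_div]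
  rw [rpow_one_add' (by positivity) (by positivity)]
  calc (M : ℝ) ^ M * ((M : ℝ) ^ M) ^ β * ((∑ α ∈ Lam M n, (∏ i, ((α i)! : ℝ)) ^ β) / M ! ^ β)
      = ((M : ℝ) ^ M) ^ β / M ! ^ β * ((M : ℝ) ^ M * ∑ α ∈ Lam M n, (∏ i, ((α i)! : ℝ)) ^ β) := by
        ring
    _ ≤ exp (β * M) * (exp (2 * M) * n ^ M) := by
        gcongr ?_ * ?_
        · rwa [div_le_iff₀' hMfac]
        · exact pow_mul_sum_Lam_factorial_rpow_le hβ hn hMn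
    _ = exp ((2 + β) * M) * n ^ M := by
        rw [← mul_assoc, ← exp_add]; ring_nf

theorem mul_log_mul_div_le {x K y : ℝ} (hx : 0 < x) (hxK : x ≤ K) (hy : 1 ≤ y) :
    x * log (K * y / x) ≤ K * (1 + log y) := by
  have hK : 0 < K := hx.trans_le hxK
  have hKx : x * log (K / x) ≤ K - x := by
    calc x * log (K / x) ≤ x * (K / x - 1) := by
          gcongr; exact log_le_sub_one_of_pos (by positivity)
      _ = K - x := by field_simp
  have hy' : x * log y ≤ K * log y := mul_le_mul_of_nonneg_right hxK (log_nonneg hy)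
  rw [mul_div_right_comm, log_mul (by positivity) (by positivity)]
  linarith

theorem pow_rpow_le_exp_half_mul {β L : ℝ} (hβ : 0 < β) (hL1 : 1 ≤ β * log L)
    (hL2 : (1 + β) * (1 + log (β * log L)) ≤ β * log L / 2) {M : ℕ}
    (hM : (M : ℝ) ≤ L / (β * log L)) :
    (L ^ M) ^ (1 + β) ≤ exp (L / 2) * ((M : ℝ) ^ M) ^ (1 + β) := by
  have hy : 0 < β * log L := one_pos.trans_le hL1
  have hL : 0 < L := by
    have h0 : 0 ≤ L := by
      rw [le_div_iff₀ hy] at hM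
      exact (mul_nonneg (Nat.cast_nonneg M) hy.le).trans hM
    refine h0.lt_of_ne fun h => ?_
    simp [← h] at hy
  rcases Nat.eq_zero_or_pos M with rfl | hM0
  · simpa only [pow_zero, one_rpow, mul_one, one_le_exp_iff] using by positivity
  have hM0' : (0 : ℝ) < M := by exact_mod_cast hM0
  have hkey : (1 + β) * (M * log (L / M)) ≤ L / 2 := by
    have h := mul_log_mul_div_le hM0' hM hL1
    rw [div_mul_cancel₀ _ hy.ne'] at h
    calc (1 + β) * (M * log (L / M)) ≤ (1 + β) * (L / (β * log L) * (1 + log (β * log L))) := by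
          gcongr
      _ = L / (β * log L) * ((1 + β) * (1 + log (β * log L))) := by ring
      _ ≤ L / (β * log L) * (β * log L / 2) := by gcongr
      _ = L / 2 := by rw [div_mul_div_comm, mul_comm L, mul_div_mul_left _ _ hy.ne']
  calc (L ^ M) ^ (1 + β) = ((L / M) ^ M) ^ (1 + β) * ((M : ℝ) ^ M) ^ (1 + β) := by
        rw [← mul_rpow (by positivity) (by positivity), ← mul_pow, div_mul_cancel₀ _ hM0'.ne']
    _ ≤ exp (L / 2) * ((M : ℝ) ^ M) ^ (1 + β) := by
        gcongr
        rw [rpow_def_of_pos (by positivity), log_pow, exp_le_exp]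
        linarith

theorem eventually_mul_one_add_log_le_half {c : ℝ} (hc : 0 < c) :
    ∀ᶠ y : ℝ in atTop, c * (1 + log y) ≤ y / 2 := by
  filter_upwards [isLittleO_log_id_atTop.bound (by positivity : (0 : ℝ) < 1 / (4 * c)),
    eventually_ge_atTop (4 * c)] with y hlog hy
  rw [norm_eq_abs, id, norm_of_nonneg (by linarith)] at hlog
  have hclog : c * log y ≤ y / 4 := by
    calc c * log y ≤ c * (1 / (4 * c) * y) := by gcongr; exact (le_abs_self _).trans hlog
      _ = y / 4 := by field_simp
  linarith

theorem eventually_two_mul_log_rpow_le (r : ℝ) : ∀ᶠ x : ℝ in atTop, 2 * log x ^ r ≤ x := by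
  filter_upwards [(isLittleO_log_rpow_rpow_atTop r one_pos).bound (by norm_num : (0 : ℝ) < 1 / 2),
    eventually_ge_atTop 0] with x hx hx0
  rw [rpow_one, norm_of_nonneg hx0] at hx
  linarith [le_abs_self (log x ^ r), (norm_eq_abs (log x ^ r)) ▸ hx]

theorem sum_Lam_multinomial_rpow_neg_le {β : ℝ} (hβ : 0 < β) {M n : ℕ}
    (h1 : 1 ≤ β * log (log n))
    (h2 : (1 + β) * (1 + log (β * log (log n))) ≤ β * log (log n) / 2)
    (h3 : (1 + β) * (1 + log (log n)) ≤ log n / 2)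
    (h4 : 2 * log n ^ (1 + β) ≤ n)
    (hM : ((M + 1 : ℕ) : ℝ) ≤ log n / (β * log (log n))) :
    ∑ α ∈ Lam M n, ((M ! : ℝ) / ∏ i, ((α i)! : ℝ)) ^ (-β)
      ≤ exp ((2 + β) * (M + 1 : ℕ)) * n ^ (M + 1) / (log n ^ (M + 1)) ^ (1 + β) := by
  have hy : 0 < β * log (log n) := one_pos.trans_le h1
  have hn : 0 < n := Nat.pos_of_ne_zero fun h => by simp [h] at hy
  have hn' : (0 : ℝ) < n := by exact_mod_cast hn
  have hL : 0 < log (n : ℝ) := (log_natCast_nonneg n).lt_of_ne' fun h => by simp [h] at hy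
  set L := log (n : ℝ) with hL_def
  have hM' : (M : ℝ) ≤ L / (β * log L) := le_trans (by push_cast; linarith) hM
  have hMn : 2 * ((M : ℝ) ^ β * M) ≤ n := by
    have hML : (M : ℝ) ≤ L := hM'.trans (div_le_self hL.le h1)
    calc 2 * ((M : ℝ) ^ β * M) = 2 * (M : ℝ) ^ (1 + β) := by
          rw [rpow_one_add' (Nat.cast_nonneg M) (by positivity), mul_comm ((M : ℝ) ^ β)]
      _ ≤ 2 * L ^ (1 + β) := by gcongr
      _ ≤ n := h4
  have hLγ : L ^ (1 + β) ≤ exp (L / 2) := by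
    rw [rpow_def_of_pos hL, exp_le_exp]
    linarith
  set S := ∑ α ∈ Lam M n, ((M ! : ℝ) / ∏ i, ((α i)! : ℝ)) ^ (-β)
  rw [le_div_iff₀' (by positivity)]
  calc (L ^ (M + 1)) ^ (1 + β) * S = L ^ (1 + β) * ((L ^ M) ^ (1 + β) * S) := by
        rw [pow_succ, mul_rpow (by positivity) hL.le]; ring
    _ ≤ exp (L / 2) * (exp (L / 2) * ((M : ℝ) ^ M) ^ (1 + β) * S) := by
        gcongr
        exact pow_rpow_le_exp_half_mul hβ h1 h2 hM'
    _ = n * (((M : ℝ) ^ M) ^ (1 + β) * S) := by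
        rw [← mul_assoc, ← mul_assoc, ← exp_add, add_halves, hL_def, exp_log hn', mul_assoc]
    _ ≤ n * (exp ((2 + β) * M) * n ^ M) :=
        mul_le_mul_of_nonneg_left (pow_rpow_mul_sum_Lam_multinomial_rpow_neg_le hβ.le hn hMn) hn'.le
    _ ≤ exp ((2 + β) * (M + 1 : ℕ)) * n ^ (M + 1) := by
        rw [Nat.cast_succ, mul_add, mul_one, exp_add, pow_succ]
        have : 1 ≤ exp (2 + β) := one_le_exp (by positivity)
        have : 0 ≤ exp ((2 + β) * M) * (n : ℝ) ^ M * n := by positivity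
        nlinarith

theorem sum_multinomial_bound_small_m_general (p q p' q' : ℝ) (hq : 1 < q)
    (hp' : 1/p + 1/p' = 1) (hq' : 1/q + 1/q' = 1) :
    ∃ C : ℝ, 0 < C ∧ ∃ N : ℕ, ∀ m n : ℕ, N ≤ n → 1 ≤ m →
      (m : ℝ) ≤ Real.log n / (q' * (1/q - 1/p) * Real.log (Real.log n)) →
      (∑ α ∈ Lam (m-1) n,
          (((m-1).factorial : ℝ) / ∏ i, ((α i).factorial : ℝ)) ^ ((1/p - 1/q) * q'))
          ^ ((1:ℝ)/q')
        ≤ C ^ m * (n : ℝ) ^ ((m : ℝ)/q') / Real.log n ^ ((m : ℝ)/p') := by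
  have hq'0 : 0 < q' := one_div_pos.mp (by linarith [(div_lt_one (by linarith)).mpr hq])
  set β := q' * (1/q - 1/p) with hβ_def
  have hL : Tendsto (fun n : ℕ => log n) atTop atTop :=
    tendsto_log_atTop.comp tendsto_natCast_atTop_atTop
  have hℓ : Tendsto (fun n : ℕ => log (log n)) atTop atTop := tendsto_log_atTop.comp hL
  rcases le_or_gt β 0 with hβ | hβ
  · obtain ⟨N, hN⟩ := eventually_atTop.mp (hℓ.eventually_ge_atTop 0)
    refine ⟨1, one_pos, N, fun m n hn hm hmn => absurd hmn (not_le.mpr ?_)⟩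
    calc log n / (β * log (log n)) ≤ 0 := div_nonpos_of_nonneg_of_nonpos
          (log_natCast_nonneg n) (mul_nonpos_of_nonpos_of_nonneg hβ (hN n hn))
      _ < m := by exact_mod_cast hm
  have hγ : 0 < 1 + β := by linarith
  obtain ⟨N, hN⟩ := eventually_atTop.mp <| ((hℓ.const_mul_atTop hβ).eventually_ge_atTop 1).and <|
    ((hℓ.const_mul_atTop hβ).eventually (eventually_mul_one_add_log_le_half hγ)).and <|
    (hL.eventually (eventually_mul_one_add_log_le_half hγ)).and <|
    tendsto_natCast_atTop_atTop.eventually (eventually_two_mul_log_rpow_le (1 + β))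
  refine ⟨exp ((2 + β) / q'), exp_pos _, N, fun m n hn hm hmn => ?_⟩
  obtain ⟨h1, h2, h3, h4⟩ := hN n hn
  obtain ⟨M, rfl⟩ := Nat.exists_eq_add_of_le' hm
  have hconj : (1 + β) * (1 / q') = 1 / p' := by
    rw [hβ_def, add_mul, one_mul, mul_comm q', mul_assoc, mul_one_div_cancel hq'0.ne', mul_one]
    linarith
  rw [Nat.add_sub_cancel, show (1/p - 1/q) * q' = -β by ring]
  calc _ ≤ (exp ((2 + β) * (M + 1 : ℕ)) * n ^ (M + 1) / (log n ^ (M + 1)) ^ (1 + β)) ^ (1 / q') :=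
        rpow_le_rpow (sum_nonneg fun α _ => by positivity)
          (sum_Lam_multinomial_rpow_neg_le hβ h1 h2 h3 h4 hmn) (by positivity)
    _ = _ := by
        rw [div_rpow (by positivity) (by positivity), mul_rpow (by positivity) (by positivity),
          ← exp_mul, ← rpow_natCast, ← rpow_natCast (log _), ← rpow_mul (by positivity),
          ← rpow_mul (by positivity), ← rpow_mul (by positivity), mul_assoc, hconj, ← exp_nat_mul]
        ring_nf

/-- For `1 < q ≤ p ≤ 2` with conjugate exponents `p'`, `q'` and `β = q'(1/q − 1/p)`,
there is `C > 0` such that for `n` large enough and `m ≤ log n / (β log log n)`: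
`(Σ_{α ∈ Λ(m−1,n)} ((m−1)!/α!)^((1/p − 1/q) q'))^(1/q') ≤ C^m n^(m/q') / (log n)^(m/p')`. -/
theorem sum_multinomial_bound_small_m (p q p' q' : ℝ) (hq : 1 < q) (hqp : q ≤ p) (hp : p ≤ 2)
    (hp' : 1/p + 1/p' = 1) (hq' : 1/q + 1/q' = 1) :
    ∃ C : ℝ, 0 < C ∧ ∃ N : ℕ, ∀ m n : ℕ, N ≤ n → 1 ≤ m →
      (m : ℝ) ≤ Real.log n / (q' * (1/q - 1/p) * Real.log (Real.log n)) →
      (∑ α ∈ Lam (m-1) n,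
          (((m-1).factorial : ℝ) / ∏ i, ((α i).factorial : ℝ)) ^ ((1/p - 1/q) * q'))
          ^ ((1:ℝ)/q')
        ≤ C ^ m * (n : ℝ) ^ ((m : ℝ)/q') / Real.log n ^ ((m : ℝ)/p') :=
  sum_multinomial_bound_small_m_general p q p' q' hq hp' hq'
end
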